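/- arXiv:math/0502316 — 3 statements merged into one kernel-verified Lean document; each statement's English description precedes it below -/
import Mathlib

section
/- For every real ν > 0 and every y > 0, the modified Bessel function of the second kind satisfies K_ν(y)/K_{ν+1}(y) < (√(y² + ν²) − ν)/y. -/
/-- The modified Bessel function of the second kind (Macdonald function),
via its integral representation `K_ν(y) = ∫_0^∞ exp(-y cosh t) cosh(ν t) dt`. -/
noncomputable def besselK (ν y : ℝ) : ℝ :=
  ∫ t in Set.Ioi (0 : ℝ), Real.exp (-y * Real.cosh t) * Real.cosh (ν * t)

/-!
Integrating the derivative of `exp (-y cosh t) sinh (ν t)` over `(0, ∞)` gives the recurrence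
`y K_{ν+1} = y K_{ν-1} + 2 ν K_ν`. Since `cosh ((ν-1)t) cosh ((ν+1)t) = cosh² (νt) + sinh² t`,
AM–GM gives `2 cosh (νt) < a cosh ((ν-1)t) + a⁻¹ cosh ((ν+1)t)` for `t ≠ 0` and every `a > 0`;
integrating with `a = K_{ν+1} / K_ν` yields the Turán inequality `K_ν² < K_{ν-1} K_{ν+1}`.
Eliminating `K_{ν-1}`, the ratio `r = K_ν / K_{ν+1}` satisfies `y r² + 2 ν r < y`, so it lies below
the positive root `(√(y² + ν²) - ν) / y`.
-/

open MeasureTheory Real Set Filter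
open scoped Nat

namespace Real

lemma one_add_sq_div_two_le_cosh (x : ℝ) : 1 + x ^ 2 / 2 ≤ cosh x := by
  have hterm (n : ℕ) : 0 ≤ x ^ (2 * n) / (2 * n)! :=
    div_nonneg ((even_two_mul n).pow_nonneg x) (by positivity)
  simpa [Finset.sum_range_succ] using
    sum_le_hasSum (Finset.range 2) (fun n _ => hterm n) (hasSum_cosh x)

lemma cosh_le_exp_abs (x : ℝ) : cosh x ≤ exp |x| := by
  rw [← cosh_abs, cosh_eq]
  linarith [exp_le_exp.2 (neg_le_self (abs_nonneg x))]

lemma abs_sinh_le_cosh (x : ℝ) : |sinh x| ≤ cosh x :=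
  abs_le.2 ⟨neg_le.1 (by simpa using (sinh_lt_cosh (-x)).le), (sinh_lt_cosh x).le⟩

lemma sinh_mul_sinh (x y : ℝ) : sinh x * sinh y = (cosh (x + y) - cosh (x - y)) / 2 := by
  rw [cosh_add, cosh_sub]
  ring

lemma cosh_sub_mul_cosh_add (x y : ℝ) :
    cosh (x - y) * cosh (x + y) = cosh x ^ 2 + sinh y ^ 2 := by
  rw [cosh_sub, cosh_add]
  linear_combination cosh x ^ 2 * cosh_sq y + sinh y ^ 2 * cosh_sq x

lemma two_mul_cosh_lt {a y : ℝ} (ha : 0 < a) (hy : y ≠ 0) (x : ℝ) :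
    2 * cosh x < a * cosh (x - y) + a⁻¹ * cosh (x + y) := by
  have hprod : (a * cosh (x - y)) * (a⁻¹ * cosh (x + y)) = cosh x ^ 2 + sinh y ^ 2 := by
    rw [← cosh_sub_mul_cosh_add]
    field_simp
  have hsinh : 0 < sinh y ^ 2 := by positivity
  refine lt_of_pow_lt_pow_left₀ 2 (by positivity) ?_
  nlinarith [sq_nonneg (a * cosh (x - y) - a⁻¹ * cosh (x + y))]

end Real

lemma exp_neg_mul_cosh_mul_cosh_le {y : ℝ} (hy : 0 < y) (ν t : ℝ) :
    exp (-y * cosh t) * cosh (ν * t) ≤ exp (ν ^ 2 / y) * exp (-(y / 4) * t ^ 2) := by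
  have hamgm : |ν * t| ≤ ν ^ 2 / y + y / 4 * t ^ 2 := by
    have hdiv : y * (ν ^ 2 / y) = ν ^ 2 := mul_div_cancel₀ _ hy.ne'
    refine abs_le.2 ⟨?_, ?_⟩ <;> nlinarith [sq_nonneg (ν + y / 2 * t), sq_nonneg (ν - y / 2 * t)]
  have hcosh := one_add_sq_div_two_le_cosh t
  calc exp (-y * cosh t) * cosh (ν * t) ≤ exp (-y * cosh t) * exp |ν * t| := by
        gcongr
        exact cosh_le_exp_abs _
    _ ≤ exp (ν ^ 2 / y) * exp (-(y / 4) * t ^ 2) := by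
        rw [← exp_add, ← exp_add, exp_le_exp]
        nlinarith

lemma integrable_exp_neg_mul_cosh_mul_cosh {y : ℝ} (hy : 0 < y) (ν : ℝ) :
    Integrable fun t => exp (-y * cosh t) * cosh (ν * t) :=
  ((integrable_exp_neg_mul_sq (by positivity : 0 < y / 4)).const_mul _).mono'
    (by fun_prop) (ae_of_all _ fun t => by
      rw [norm_of_nonneg (by positivity)]
      exact exp_neg_mul_cosh_mul_cosh_le hy ν t)

section StrictIntegral

variable {X : Type*} [MeasurableSpace X] {μ : Measure X} {s : Set X} {f g : X → ℝ}

lemma setIntegral_pos_of_forall_pos (hs : MeasurableSet s) (hμs : μ s ≠ 0)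
    (hf : IntegrableOn f s μ) (hpos : ∀ x ∈ s, 0 < f x) : 0 < ∫ x in s, f x ∂μ := by
  rw [setIntegral_pos_iff_support_of_nonneg_ae _ hf,
    inter_eq_right.2 fun x hx => Function.mem_support.2 (hpos x hx).ne', pos_iff_ne_zero]
  · exact hμs
  · filter_upwards [ae_restrict_mem hs] with x hx using (hpos x hx).le

lemma setIntegral_lt_setIntegral_of_forall_lt (hs : MeasurableSet s) (hμs : μ s ≠ 0)
    (hf : IntegrableOn f s μ) (hg : IntegrableOn g s μ) (hlt : ∀ x ∈ s, f x < g x) :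
    ∫ x in s, f x ∂μ < ∫ x in s, g x ∂μ := by
  rw [← sub_pos, ← integral_sub hg hf]
  exact setIntegral_pos_of_forall_pos hs hμs (hg.sub hf) fun x hx => sub_pos.2 (hlt x hx)

end StrictIntegral

section Bessel

variable {y : ℝ}

lemma besselK_pos (ν : ℝ) (hy : 0 < y) : 0 < besselK ν y :=
  setIntegral_pos_of_forall_pos measurableSet_Ioi (by simp)
    (integrable_exp_neg_mul_cosh_mul_cosh hy ν).integrableOn fun t _ => by positivity

lemma besselK_recurrence (ν : ℝ) (hy : 0 < y) :
    y * besselK (ν + 1) y = y * besselK (ν - 1) y + 2 * ν * besselK ν y := by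
  have hK (c : ℝ) := (integrable_exp_neg_mul_cosh_mul_cosh hy c).integrableOn (s := Ioi 0)
  let F t := exp (-y * cosh t) * sinh (ν * t)
  let G t := ν * (exp (-y * cosh t) * cosh (ν * t)) - y / 2 *
    (exp (-y * cosh t) * cosh ((ν + 1) * t) - exp (-y * cosh t) * cosh ((ν - 1) * t))
  have hderiv (t : ℝ) : HasDerivAt F (G t) t := by
    refine (((hasDerivAt_cosh t).const_mul (-y)).exp.mul
      ((hasDerivAt_id t).const_mul ν).sinh).congr_deriv ?_
    simp only [G, id, mul_one, add_one_mul, sub_one_mul]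
    linear_combination (-y * exp (-y * cosh t)) * sinh_mul_sinh (ν * t) t
  have hG : IntegrableOn G (Ioi 0) := ((hK ν).const_mul ν).sub (((hK _).sub (hK _)).const_mul _)
  have hF : IntegrableOn F (Ioi 0) := (hK ν).mono' (by fun_prop) (ae_of_all _ fun t => by
    rw [norm_mul, norm_of_nonneg (exp_pos _).le, norm_eq_abs]
    exact mul_le_mul_of_nonneg_left (abs_sinh_le_cosh _) (exp_pos _).le)
  have hFTC := integral_Ioi_of_hasDerivAt_of_tendsto' (fun t _ => hderiv t) hG
    (tendsto_zero_of_hasDerivAt_of_integrableOn_Ioi (fun t _ => hderiv t) hG hF)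
  simp only [F, G, mul_zero, sinh_zero, sub_zero] at hFTC
  rw [integral_sub ((hK ν).const_mul ν) (((hK _).sub' (hK _)).const_mul _), integral_const_mul,
    integral_const_mul, integral_sub (hK _) (hK _)] at hFTC
  unfold besselK
  linarith

lemma two_mul_besselK_lt (ν : ℝ) (hy : 0 < y) {a : ℝ} (ha : 0 < a) :
    2 * besselK ν y < a * besselK (ν - 1) y + a⁻¹ * besselK (ν + 1) y := by
  have hK (c : ℝ) := (integrable_exp_neg_mul_cosh_mul_cosh hy c).integrableOn (s := Ioi 0)
  simp only [besselK, ← integral_const_mul]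
  rw [← integral_add ((hK _).const_mul _) ((hK _).const_mul _)]
  refine setIntegral_lt_setIntegral_of_forall_lt measurableSet_Ioi (by simp)
    ((hK ν).const_mul _) (((hK _).const_mul _).add ((hK _).const_mul _)) fun t ht => ?_
  have := mul_lt_mul_of_pos_left (two_mul_cosh_lt ha (ne_of_gt ht) (ν * t))
    (exp_pos (-y * cosh t))
  rw [sub_mul, add_mul, one_mul]
  linarith

lemma besselK_sq_lt_mul (ν : ℝ) (hy : 0 < y) :
    besselK ν y ^ 2 < besselK (ν - 1) y * besselK (ν + 1) y := by
  have hb := besselK_pos ν hy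
  have hc := besselK_pos (ν + 1) hy
  have h := two_mul_besselK_lt ν hy (div_pos hc hb)
  rw [inv_div, div_mul_cancel₀ _ hc.ne', ← sub_lt_iff_lt_add, div_mul_eq_mul_div,
    lt_div_iff₀ hb] at h
  linarith

end Bessel

lemma lt_sqrt_sub_div_of_mul_sq_add_lt {y ν r : ℝ} (hy : 0 < y) (h : y * r ^ 2 + 2 * ν * r < y) :
    r < (√(y ^ 2 + ν ^ 2) - ν) / y := by
  rw [lt_div_iff₀ hy, lt_sub_iff_add_lt]
  apply lt_sqrt_of_sq_lt
  nlinarith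

theorem stmt_0_general (ν y : ℝ) (hy : 0 < y) :
    besselK ν y / besselK (ν + 1) y < (Real.sqrt (y ^ 2 + ν ^ 2) - ν) / y := by
  have hb := besselK_pos ν hy
  have hc := besselK_pos (ν + 1) hy
  have key : y * besselK ν y ^ 2 + 2 * ν * besselK ν y * besselK (ν + 1) y
      < y * besselK (ν + 1) y ^ 2 := by
    nlinarith [besselK_sq_lt_mul ν hy, besselK_recurrence ν hy]
  apply lt_sqrt_sub_div_of_mul_sq_add_lt hy
  rw [div_pow]
  field_simp
  linarith

theorem stmt_0 (ν y : ℝ) (hν : 0 < ν) (hy : 0 < y) :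
    besselK ν y / besselK (ν + 1) y < (Real.sqrt (y ^ 2 + ν ^ 2) - ν) / y :=
  stmt_0_general ν y hy
end

section
/- For every v > 0 and every λ ≥ 0, the infimum over u ∈ (0, 1/v) of λu + (u/2)(1/u − v)² equals √(2λ + v²) − v. -/
theorem stmt_2 (v lam : ℝ) (hv : 0 < v) (hlam : 0 ≤ lam) :
    sInf ((fun u : ℝ => lam * u + u / 2 * (1 / u - v) ^ 2) '' Set.Ioo 0 (1 / v)) =
      Real.sqrt (2 * lam + v ^ 2) - v := by
  set f : ℝ → ℝ := fun u : ℝ => lam * u + u / 2 * (1 / u - v) ^ 2 with hf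
  set s : ℝ := Real.sqrt (2 * lam + v ^ 2) with hs
  have hsum : (0:ℝ) ≤ 2 * lam + v ^ 2 := by positivity
  have hs2 : s ^ 2 = 2 * lam + v ^ 2 := Real.sq_sqrt hsum
  have hsv : v ≤ s := by
    rw [hs]
    nlinarith [Real.sq_sqrt hsum, Real.sqrt_nonneg (2 * lam + v ^ 2)]
  have hspos : 0 < s := lt_of_lt_of_le hv hsv
  -- lower bound
  have hlb : ∀ u ∈ Set.Ioo (0:ℝ) (1 / v), s - v ≤ f u := by
    intro u hu
    obtain ⟨hu0, _⟩ := hu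
    have h1 : (1 : ℝ) / u * u = 1 := by field_simp
    have h2 : (0:ℝ) ≤ (s * u - 1) ^ 2 := sq_nonneg _
    have h3 : (0:ℝ) ≤ (1 / u - v) ^ 2 := sq_nonneg _
    have h4 : u^2 * (1/u - v)^2 = (1 - u*v)^2 := by
      rw [← mul_pow]
      congr 1
      field_simp
    simp only [hf]
    nlinarith [h4, hs2, h2, mul_pos hu0 hu0, mul_pos (mul_pos hu0 hu0) hu0]
  have hne : ((f '' Set.Ioo 0 (1 / v))).Nonempty := by
    refine ⟨f (1 / (2 * v)), ⟨1 / (2 * v), ⟨by positivity, ?_⟩, rfl⟩⟩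
    rw [div_lt_div_iff₀ (by positivity) hv]
    nlinarith
  have hbdd : BddBelow (f '' Set.Ioo 0 (1 / v)) := by
    refine ⟨s - v, ?_⟩
    rintro y ⟨u, hu, rfl⟩
    exact hlb u hu
  have hge : s - v ≤ sInf (f '' Set.Ioo 0 (1 / v)) := by
    apply le_csInf hne
    rintro y ⟨u, hu, rfl⟩
    exact hlb u hu
  have hle : sInf (f '' Set.Ioo 0 (1 / v)) ≤ s - v := by
    rcases eq_or_lt_of_le hlam with h0 | hpos
    · -- lam = 0, value approached as u → 1/v
      have hsveq : s = v := by
        rw [hs, ← h0]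
        simp
        rw [Real.sqrt_sq hv.le]
      rw [hsveq, sub_self]
      -- f tends to 0 as u → 1/v from the left
      have hcont : ContinuousAt f (1 / v) := by
        have : (1:ℝ) / v ≠ 0 := by positivity
        fun_prop (disch := assumption)
      have hf0 : f (1 / v) = 0 := by
        simp only [hf, ← h0]
        have : (1:ℝ) / (1 / v) = v := one_div_one_div v
        rw [this]
        ring
      have htend : Filter.Tendsto f (nhdsWithin (1/v) (Set.Iio (1/v))) (nhds 0) := by
        rw [← hf0]
        exact hcont.continuousWithinAt.tendsto
      have hev : ∀ᶠ u in nhdsWithin (1/v) (Set.Iio (1/v)),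
          sInf (f '' Set.Ioo 0 (1 / v)) ≤ f u := by
        filter_upwards [Ioo_mem_nhdsLT_of_mem ⟨by positivity, le_refl _⟩] with u hu
        exact csInf_le hbdd ⟨u, hu, rfl⟩
      exact ge_of_tendsto htend hev
    · -- lam > 0, minimum attained at u = 1/s
      have hvs : v < s := by
        rw [hs]
        nlinarith [Real.sq_sqrt hsum, Real.sqrt_nonneg (2 * lam + v ^ 2)]
      have hmem : (1 / s) ∈ Set.Ioo (0:ℝ) (1 / v) := by
        constructor
        · positivity
        · exact one_div_lt_one_div_of_lt hv hvs
      have hval : f (1 / s) = s - v := by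
        simp only [hf]
        have h1 : (1:ℝ) / (1 / s) = s := one_div_one_div s
        rw [h1]
        field_simp
        nlinarith
      calc sInf (f '' Set.Ioo 0 (1 / v)) ≤ f (1 / s) := csInf_le hbdd ⟨1 / s, hmem, rfl⟩
        _ = s - v := hval
  linarith
end

section
/- Let κ > 0, let φ, Γ : (0,∞) → ℝ be continuous with Γ differentiable and satisfying x·Γ'(x) − 2Γ(x)² − κΓ(x) = −4x on (0,∞), and let φ be differentiable with x·φ'(x) − 2φ(x)² − κφ(x) + 4x < 0 for all x > 0. Suppose there exists B > 0 such that Γ(x) < φ(x) for all x ≥ B. Then Γ(x) < φ(x) for all x > 0. -/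
theorem stmt_4 (κ : ℝ) (hκ : 0 < κ) (Γ φ Γ' φ' : ℝ → ℝ)
    (hΓ : ∀ x > 0, HasDerivAt Γ (Γ' x) x)
    (hΓode : ∀ x > 0, x * Γ' x - 2 * (Γ x) ^ 2 - κ * Γ x = -4 * x)
    (hφ : ∀ x > 0, HasDerivAt φ (φ' x) x)
    (hφsuper : ∀ x > 0, x * φ' x - 2 * (φ x) ^ 2 - κ * φ x + 4 * x < 0)
    (B : ℝ) (hB : 0 < B) (hcomp : ∀ x ≥ B, Γ x < φ x) :
    ∀ x > 0, Γ x < φ x := by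
  by_contra hcon
  push_neg at hcon
  obtain ⟨x₀, hx₀, hle⟩ := hcon
  -- w = φ - Γ
  set w : ℝ → ℝ := fun x => φ x - Γ x with hw
  have hx₀B : x₀ ≤ B := by
    by_contra h
    push_neg at h
    exact absurd (hcomp x₀ h.le) (not_lt.mpr hle)
  have hwcont : ContinuousOn w (Set.Icc x₀ B) := by
    intro x hx
    have hxpos : 0 < x := lt_of_lt_of_le hx₀ hx.1
    exact (((hφ x hxpos).sub (hΓ x hxpos)).continuousAt).continuousWithinAt
  set S : Set ℝ := Set.Icc x₀ B ∩ w ⁻¹' Set.Iic 0 with hS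
  have hSclosed : IsClosed S :=
    hwcont.preimage_isClosed_of_isClosed isClosed_Icc isClosed_Iic
  have hSsub : S ⊆ Set.Icc x₀ B := Set.inter_subset_left
  have hScomp : IsCompact S := isCompact_Icc.of_isClosed_subset hSclosed hSsub
  have hx₀S : x₀ ∈ S := ⟨⟨le_refl _, hx₀B⟩, by simpa [hw] using hle⟩
  set z := sSup S with hz
  have hzS : z ∈ S := hScomp.sSup_mem ⟨x₀, hx₀S⟩
  have hzpos : 0 < z := lt_of_lt_of_le hx₀ hzS.1.1
  have hwz_le : w z ≤ 0 := hzS.2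
  have hzB : z < B := by
    rcases lt_or_eq_of_le hzS.1.2 with h | h
    · exact h
    · exfalso
      have := hcomp B le_rfl
      rw [h] at hwz_le
      simp only [hw] at hwz_le
      linarith
  -- on (z, B], w > 0
  have hpos : ∀ x ∈ Set.Ioc z B, 0 < w x := by
    intro x hx
    by_contra h
    push_neg at h
    have hxS : x ∈ S := ⟨⟨le_trans hzS.1.1 hx.1.le, hx.2⟩, h⟩
    have : x ≤ z := le_csSup hScomp.bddAbove hxS
    exact absurd hx.1 (not_lt.mpr this)
  -- w z = 0
  have hne : (Filter.NeBot (nhdsWithin z (Set.Ioi z))) := nhdsGT_neBot z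
  have hwz0 : w z = 0 := by
    have hct : ContinuousAt w z := ((hφ z hzpos).sub (hΓ z hzpos)).continuousAt
    have htend : Filter.Tendsto w (nhdsWithin z (Set.Ioi z)) (nhds (w z)) :=
      hct.continuousWithinAt.tendsto
    have hev : ∀ᶠ x in nhdsWithin z (Set.Ioi z), 0 ≤ w x := by
      filter_upwards [Ioc_mem_nhdsGT_of_mem ⟨le_refl z, hzB⟩] with x hx
      exact (hpos x hx).le
    have : 0 ≤ w z := ge_of_tendsto htend hev
    linarith
  have hφΓz : φ z = Γ z := by
    simpa [hw, sub_eq_zero] using hwz0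
  -- derivative of w at z is negative
  set d := φ' z - Γ' z with hd
  have hdneg : d < 0 := by
    have h1 := hΓode z hzpos
    have h2 := hφsuper z hzpos
    rw [hφΓz] at h2
    have : z * d < 0 := by simp only [hd]; nlinarith
    nlinarith
  have hderiv : HasDerivAt w d z := (hφ z hzpos).sub (hΓ z hzpos)
  rw [hasDerivAt_iff_tendsto_slope] at hderiv
  have hderiv' : Filter.Tendsto (slope w z) (nhdsWithin z (Set.Ioi z)) (nhds d) :=
    hderiv.mono_left (nhdsWithin_mono z (fun x hx => ne_of_gt hx))
  have hev1 : ∀ᶠ x in nhdsWithin z (Set.Ioi z), slope w z x < 0 :=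
    hderiv'.eventually_lt_const hdneg
  have hev2 : ∀ᶠ x in nhdsWithin z (Set.Ioi z), x ∈ Set.Ioc z B :=
    Ioc_mem_nhdsGT_of_mem ⟨le_refl z, hzB⟩
  obtain ⟨x, hsl, hxIoc⟩ := (hev1.and hev2).exists
  have hxz : z < x := hxIoc.1
  have : w x - w z < 0 := by
    have := hsl
    rw [slope_def_field] at this
    have hden : 0 < x - z := sub_pos.mpr hxz
    have := (div_neg_iff).mp (by simpa [div_eq_div_iff] using this)
    rcases this with ⟨h1, h2⟩ | ⟨h1, h2⟩
    · linarith
    · linarith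
  have := hpos x hxIoc
  linarith
end
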